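/- Let G be a non-amenable bounded-degree connected graph. There exist constants T₀, δ₀, σ > 0 such that for every vertex x and every T ≥ T₀, the geometrically-killed random walk started at x with killing parameter T satisfies: with probability at least δ₀, the walk has length at least T and d(x, w(T)) ≥ σT. -/

import Mathlib

open MeasureTheory
open scoped ENNReal

/-! At time `T` the walk sits at any given vertex with probability at most `Cρ^T`, while the
ball of radius `σT` has at most `2D^{σT}` vertices. With `σ = 1/(2k)` and `Dρ^k ≤ 1` we get
`D^{σT} ≤ ρ^{-T/2}`, so the walk lies in that ball with probability at most
`2Cρ^{T/2} ≤ 1/2`. The length of the walk is independent of its path and is at least `T` with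
probability at least `1/3`, so both events occur together with probability at least `1/6`. -/

lemma one_third_le_div_add_one_pow (T : ℕ) : (1 / 3 : ℝ) ≤ ((T : ℝ) / (T + 1)) ^ T := by
  rcases Nat.eq_zero_or_pos T with rfl | hT
  · norm_num
  have hT' : (0 : ℝ) < T := by exact_mod_cast hT
  have hx : (0 : ℝ) < T / (T + 1) := by positivity
  have hlog : -1 ≤ T * Real.log (T / (T + 1)) := by
    have h := Real.one_sub_inv_le_log_of_pos hx
    rw [inv_div] at h
    calc (-1 : ℝ) = T * (1 - (T + 1) / T) := by field_simp; ring
      _ ≤ T * Real.log (T / (T + 1)) := mul_le_mul_of_nonneg_left h hT'.le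
  calc (1 / 3 : ℝ) ≤ Real.exp (-1) := by linarith [Real.exp_neg_one_gt_d9]
    _ ≤ Real.exp (T * Real.log (T / (T + 1))) := Real.exp_le_exp.2 hlog
    _ = ((T : ℝ) / (T + 1)) ^ T := by rw [Real.exp_nat_mul, Real.exp_log hx]

lemma pow_div_mul_pow_le_pow_half {D ρ : ℝ} (hD : 0 ≤ D) (hρ0 : 0 ≤ ρ) (hρ1 : ρ ≤ 1)
    {k : ℕ} (hk : D * ρ ^ k ≤ 1) (T : ℕ) : D ^ (T / (2 * k)) * ρ ^ T ≤ ρ ^ (T / 2) := by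
  set r := T / (2 * k)
  have hkr : k * r ≤ T / 2 := by
    rw [Nat.le_div_iff_mul_le two_pos]
    calc k * r * 2 = r * (2 * k) := by ring
      _ ≤ T := Nat.div_mul_le_self T (2 * k)
  calc D ^ r * ρ ^ T = (D * ρ ^ k) ^ r * ρ ^ (T - k * r) := by
        rw [mul_pow, ← pow_mul, mul_assoc, ← pow_add]
        congr 2
        omega
    _ ≤ 1 * ρ ^ (T - k * r) := by
        gcongr
        exact pow_le_one₀ (by positivity) hk
    _ ≤ ρ ^ (T / 2) := by
        rw [one_mul]
        exact pow_le_pow_of_le_one hρ0 hρ1 (by omega)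

lemma Nat.cast_div_le_of_div_lt {n m d : ℕ} (h : n / m < d) : (n : ℝ) / m ≤ d := by
  rcases Nat.eq_zero_or_pos m with rfl | hm
  · simp
  rw [div_le_iff₀ (by exact_mod_cast hm)]
  exact_mod_cast ((Nat.div_lt_iff_lt_mul hm).1 h).le

lemma exists_mul_pow_le (c : ℝ) {ε ρ : ℝ} (hε : 0 < ε) (hρ0 : 0 ≤ ρ) (hρ1 : ρ < 1) :
    ∃ N : ℕ, ∀ n ≥ N, c * ρ ^ n ≤ ε := by
  have h := (tendsto_pow_atTop_nhds_zero_of_lt_one hρ0 hρ1).const_mul c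
  rw [mul_zero] at h
  exact Filter.eventually_atTop.1 (h.eventually (ge_mem_nhds hε))

section
variable {Ω V : Type*} [MeasurableSpace Ω] {μ : Measure Ω} {f : Ω → V} {s : Set V}

lemma measure_mem_le_card_mul (hs : s.Finite) {p : ℝ≥0∞}
    (hp : ∀ y, μ {ω | f ω = y} ≤ p) :
    μ {ω | f ω ∈ s} ≤ Nat.card s * p :=
  calc μ {ω | f ω ∈ s} ≤ μ (⋃ y ∈ hs.toFinset, {ω | f ω = y}) :=
        measure_mono fun ω h => by simpa using h
    _ ≤ ∑ y ∈ hs.toFinset, μ {ω | f ω = y} := measure_biUnion_finset_le _ _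
    _ ≤ ∑ _y ∈ hs.toFinset, p := Finset.sum_le_sum fun y _ => hp y
    _ = Nat.card s * p := by
        rw [Finset.sum_const, nsmul_eq_mul, Nat.card_eq_card_finite_toFinset hs]

lemma inv_two_le_measure_not_mem [IsProbabilityMeasure μ] (hs : s.Finite) {p : ℝ}
    (hp : ∀ y, μ {ω | f ω = y} ≤ ENNReal.ofReal p) (hsp : Nat.card s * p ≤ 1 / 2) :
    2⁻¹ ≤ μ {ω | f ω ∉ s} := by
  have hsp' : Nat.card s * ENNReal.ofReal p ≤ 2⁻¹ := by
    rw [← ENNReal.ofReal_natCast, ← ENNReal.ofReal_mul (Nat.cast_nonneg _)]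
    exact ENNReal.ofReal_le_of_le_toReal (by simpa using hsp)
  have h := measure_univ_le_add_compl (μ := μ) {ω | f ω ∈ s}
  rw [measure_univ] at h
  rw [← ENNReal.one_sub_inv_two]
  exact tsub_le_iff_left.2 <|
    h.trans (add_le_add_left ((measure_mem_le_card_mul hs hp).trans hsp') _)

end

theorem stmt5_general {V Ω : Type*} [MeasurableSpace Ω]
    (d : V → V → ℕ) (D : ℕ)
    (hball : ∀ (x : V) (r : ℕ),
      {y : V | d x y ≤ r}.Finite ∧ Nat.card {y : V | d x y ≤ r} ≤ 2 * D ^ r)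
    (C ρ : ℝ) (hC : 0 < C) (hρ0 : 0 < ρ) (hρ1 : ρ < 1)
    (μ : V → ℕ → Measure Ω) (hprob : ∀ x T, IsProbabilityMeasure (μ x T))
    (len : Ω → ℕ) (pos : Ω → ℕ → V)
    (hkernel : ∀ (x : V) (T n : ℕ) (y : V),
      μ x T {ω | pos ω n = y} ≤ ENNReal.ofReal (C * ρ ^ n))
    (hgeom : ∀ (x : V) (T : ℕ), 0 < T →
      μ x T {ω | T ≤ len ω} = ENNReal.ofReal (((T : ℝ) / (T + 1)) ^ T))
    (hindep : ∀ (x : V) (T n : ℕ) (A : Set V),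
      μ x T ({ω | T ≤ len ω} ∩ {ω | pos ω n ∈ A})
        = μ x T {ω | T ≤ len ω} * μ x T {ω | pos ω n ∈ A}) :
    ∃ (T₀ : ℕ) (δ₀ σ : ℝ), 0 < δ₀ ∧ 0 < σ ∧
      ∀ (x : V) (T : ℕ), T₀ ≤ T →
        ENNReal.ofReal δ₀
          ≤ μ x T ({ω | T ≤ len ω} ∩ {ω | σ * T ≤ (d x (pos ω T) : ℝ)}) := by
  obtain ⟨k, hk⟩ := exists_mul_pow_le (D : ℝ) one_pos hρ0.le hρ1
  obtain ⟨N, hN⟩ := exists_mul_pow_le C (by norm_num : (0 : ℝ) < 1 / 4) hρ0.le hρ1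
  refine ⟨2 * N + 1, 1 / 6, 1 / (2 * (k + 1) : ℕ), by norm_num, by positivity,
    fun x T hT => ?_⟩
  have := hprob x T
  set r := T / (2 * (k + 1))
  obtain ⟨hfin, hcard⟩ := hball x r
  have hsmall : (Nat.card {y | d x y ≤ r} : ℝ) * (C * ρ ^ T) ≤ 1 / 2 :=
    calc (Nat.card {y | d x y ≤ r} : ℝ) * (C * ρ ^ T) ≤ 2 * D ^ r * (C * ρ ^ T) :=
          mul_le_mul_of_nonneg_right (by exact_mod_cast hcard) (by positivity)
      _ = 2 * C * (D ^ r * ρ ^ T) := by ring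
      _ ≤ 2 * C * ρ ^ (T / 2) := by
          gcongr
          exact pow_div_mul_pow_le_pow_half (by positivity) hρ0.le hρ1.le
            (hk (k + 1) k.le_succ) T
      _ ≤ 1 / 2 := by linarith [hN (T / 2) (by omega)]
  have hfar : 2⁻¹ ≤ μ x T {ω | pos ω T ∉ {y | d x y ≤ r}} :=
    inv_two_le_measure_not_mem hfin (hkernel x T T) hsmall
  have hlong : ENNReal.ofReal (1 / 3) ≤ μ x T {ω | T ≤ len ω} := by
    rw [hgeom x T (by omega)]
    exact ENNReal.ofReal_le_ofReal (one_third_le_div_add_one_pow T)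
  calc ENNReal.ofReal (1 / 6) = ENNReal.ofReal (1 / 3) * 2⁻¹ := by
        rw [← ENNReal.ofReal_ofNat 2, ← ENNReal.ofReal_inv_of_pos two_pos,
          ← ENNReal.ofReal_mul (by norm_num)]
        norm_num
    _ ≤ μ x T {ω | T ≤ len ω} * μ x T {ω | pos ω T ∈ {y | d x y ≤ r}ᶜ} :=
        mul_le_mul' hlong hfar
    _ = μ x T ({ω | T ≤ len ω} ∩ {ω | pos ω T ∈ {y | d x y ≤ r}ᶜ}) :=
        (hindep x T T _).symm
    _ ≤ _ := measure_mono <| Set.inter_subset_inter_right _ fun ω hω => by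
        simpa only [Set.mem_ofPred_eq, one_div_mul_eq_div] using
          Nat.cast_div_le_of_div_lt (not_le.1 hω)

/-- Speed lemma: on a non-amenable bounded-degree connected graph (encoded by the
ball-cardinality bound and the heat-kernel bound `P_x(w(n)=y) ≤ C ρ^n`, `ρ < 1`),
there are `T₀, δ₀, σ > 0` so that for every vertex `x` and every `T ≥ T₀`, the
geometrically-killed walk `P_x^{(T)}` satisfies: with probability at least `δ₀`,
its length is at least `T` and `d(x, w(T)) ≥ σT`. -/
theorem stmt5 {V Ω : Type*} [MeasurableSpace Ω]
    (d : V → V → ℕ) (D : ℕ) (hD : 0 < D)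
    (hball : ∀ (x : V) (r : ℕ),
      {y : V | d x y ≤ r}.Finite ∧ Nat.card {y : V | d x y ≤ r} ≤ 2 * D ^ r)
    (C ρ : ℝ) (hC : 0 < C) (hρ0 : 0 < ρ) (hρ1 : ρ < 1)
    (μ : V → ℕ → Measure Ω) (hprob : ∀ x T, IsProbabilityMeasure (μ x T))
    (len : Ω → ℕ) (pos : Ω → ℕ → V)
    (hkernel : ∀ (x : V) (T n : ℕ) (y : V),
      μ x T {ω | pos ω n = y} ≤ ENNReal.ofReal (C * ρ ^ n))
    (hgeom : ∀ (x : V) (T : ℕ), 0 < T →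
      μ x T {ω | T ≤ len ω} = ENNReal.ofReal (((T : ℝ) / (T + 1)) ^ T))
    (hindep : ∀ (x : V) (T n : ℕ) (A : Set V),
      μ x T ({ω | T ≤ len ω} ∩ {ω | pos ω n ∈ A})
        = μ x T {ω | T ≤ len ω} * μ x T {ω | pos ω n ∈ A}) :
    ∃ (T₀ : ℕ) (δ₀ σ : ℝ), 0 < δ₀ ∧ 0 < σ ∧
      ∀ (x : V) (T : ℕ), T₀ ≤ T →
        ENNReal.ofReal δ₀
          ≤ μ x T ({ω | T ≤ len ω} ∩ {ω | σ * T ≤ (d x (pos ω T) : ℝ)}) :=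
  stmt5_general d D hball C ρ hC hρ0 hρ1 μ hprob len pos hkernel hgeom hindep
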